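/- arXiv:cs/0703105 — 3 statements merged into one kernel-verified Lean document; each statement's English description precedes it below -/
import Mathlib

section
/- Let t0 = d/2 and suppose d/2 < t < n - sqrt(n(n-d)) with 0 < d < n real. If the multiplicity m is a real number satisfying m > (t - t0)/(n - sqrt(n(n-d)) - t), then (tm + t - t0)^2 / (4(t - t0)) > n m (m+1) / 2. -/
theorem freedom_exceeds_constraints (n d t m : ℝ) (hd : 0 < d) (hdn : d < n)
    (ht0 : d / 2 < t) (htJ : t < n - Real.sqrt (n * (n - d)))
    (hm : m > (t - d / 2) / (n - Real.sqrt (n * (n - d)) - t)) :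
    (t * m + t - d / 2) ^ 2 / (4 * (t - d / 2)) > n * m * (m + 1) / 2 := by
  set s := Real.sqrt (n * (n - d)) with hsdef
  have hnd : 0 < n * (n - d) := by nlinarith
  have hs2 : s ^ 2 = n * (n - d) := Real.sq_sqrt hnd.le
  have hspos : 0 < s := Real.sqrt_pos.mpr hnd
  have hden : 0 < n - s - t := by linarith
  have ha : 0 < t - d / 2 := by linarith
  have hm0 : 0 < m := lt_trans (div_pos ha hden) hm
  have hkey : t - d / 2 < m * (n - s - t) := (div_lt_iff₀ hden).mp hm
  rw [gt_iff_lt, div_lt_div_iff₀ (by norm_num) (by linarith)]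
  have h1 : 0 < m * (n - t) - (t - d / 2) - m * s := by nlinarith [hkey]
  have h2 : 0 < m * (n - t) - (t - d / 2) + m * s := by nlinarith [mul_pos hm0 hspos]
  have hms : m ^ 2 * s ^ 2 = m ^ 2 * (n * (n - d)) := by rw [hs2]
  nlinarith [mul_pos h1 h2, hms]
end

section
/- Let 0 < d < n be reals with t0 = d/2, and let m be a positive real. If t < t0/(m+1) + (m/(m+1)) * (n - sqrt(n(n-d))) and t > t0, then (tm + t - t0)^2 / (4(t - t0)) > n m (m+1) / 2. -/
/-!
Put `A = (m + 1) t - d / 2`. Since `2 n m (m + 1) (t - d / 2) = 2 n m A - m² n d`, the claim says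
that the quadratic `A² - 2 n m A + m² n d` is positive. Its smaller root is `m (n - √(n (n - d)))`,
and the upper bound on `t` says exactly that `A` lies below it.
-/

theorem sq_sub_two_mul_add_pos_of_lt_sub_sqrt {p q x : ℝ} (h : x < p - √(p ^ 2 - q)) :
    0 < x ^ 2 - 2 * p * x + q := by
  have hpx : 0 < p - x := (Real.sqrt_nonneg _).trans_lt (by linarith)
  have hdisc : p ^ 2 - q < (p - x) ^ 2 := (Real.sqrt_lt' hpx).1 (by linarith)
  linarith

theorem mul_sqrt_mul_sub {m : ℝ} (hm : 0 ≤ m) (n d : ℝ) :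
    m * √(n * (n - d)) = √((n * m) ^ 2 - m ^ 2 * (n * d)) := by
  rw [show (n * m) ^ 2 - m ^ 2 * (n * d) = m ^ 2 * (n * (n - d)) by ring,
    Real.sqrt_mul (sq_nonneg m), Real.sqrt_sq hm]

theorem fixed_multiplicity_lecc_general (n d t m : ℝ) (hm : 0 < m)
    (htu : t < d / 2 / (m + 1) + (m / (m + 1)) * (n - Real.sqrt (n * (n - d))))
    (htl : t > d / 2) :
    (t * m + t - d / 2) ^ 2 / (4 * (t - d / 2)) > n * m * (m + 1) / 2 := by
  have hm1 : 0 < m + 1 := by linarith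
  have hbelow_root : t * m + t - d / 2 < n * m - √((n * m) ^ 2 - m ^ 2 * (n * d)) := by
    have h := (lt_div_iff₀ hm1).1 <| htu.trans_eq <|
      show d / 2 / (m + 1) + m / (m + 1) * (n - √(n * (n - d)))
        = (d / 2 + m * (n - √(n * (n - d)))) / (m + 1) by ring
    linarith [mul_sqrt_mul_sub hm.le n d]
  have hquad := sq_sub_two_mul_add_pos_of_lt_sub_sqrt hbelow_root
  rw [gt_iff_lt, lt_div_iff₀ (by linarith)]
  linarith

theorem fixed_multiplicity_lecc (n d t m : ℝ) (hd : 0 < d) (hdn : d < n) (hm : 0 < m)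
    (htu : t < d / 2 / (m + 1) + (m / (m + 1)) * (n - Real.sqrt (n * (n - d))))
    (htl : t > d / 2) :
    (t * m + t - d / 2) ^ 2 / (4 * (t - d / 2)) > n * m * (m + 1) / 2 :=
  fixed_multiplicity_lecc_general n d t m hm htu htl
end

section
/- The postfix matrix product of Berlekamp-Massey update steps preserves coprimality: if lambda^{(i)} and X*b^{(i)} are coprime polynomials, then after one update step of either type, lambda^{(i+1)} and X*b^{(i+1)} remain coprime. -/
open Polynomial

theorem bma_update_preserves_coprime {F : Type*} [Field F]
    (lam b : F[X]) (h : IsCoprime lam (X * b)) :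
    (∀ c : F, IsCoprime lam (-(C c) * X * lam + X ^ 2 * b)) ∧
    (∀ c : F, c ≠ 0 → IsCoprime (lam + C c⁻¹ * X * b) (-(C c) * X * lam)) := by
  have hX : IsCoprime lam X := h.of_mul_right_left
  constructor
  · intro c
    have h2 : IsCoprime lam (X ^ 2 * b) := by
      have := hX.mul_right h
      simpa [sq, mul_assoc] using this
    have := h2.add_mul_right_right (-(C c) * X)
    have e : X ^ 2 * b + -(C c) * X * lam = -(C c) * X * lam + X ^ 2 * b := by ring
    rwa [e] at this
  · intro c hc
    have hu : IsUnit (-(C c) : F[X]) := (isUnit_C.mpr hc.isUnit).neg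
    have hcX : IsCoprime (lam + C c⁻¹ * X * b) X := by
      have := (hX.symm.add_mul_left_right (C c⁻¹ * b)).symm
      have e : lam + X * (C c⁻¹ * b) = lam + C c⁻¹ * X * b := by ring
      rwa [e] at this
    have hclam : IsCoprime (lam + C c⁻¹ * X * b) lam := by
      have hu' : IsUnit (C c⁻¹ : F[X]) := isUnit_C.mpr (inv_ne_zero hc).isUnit
      have h1 : IsCoprime (C c⁻¹ * (X * b)) lam :=
        (isCoprime_mul_unit_left_left hu' _ _).mpr h.symm
      have := h1.add_mul_right_left 1
      have e : C c⁻¹ * (X * b) + 1 * lam = lam + C c⁻¹ * X * b := by ring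
      rwa [e] at this
    have : IsCoprime (lam + C c⁻¹ * X * b) (X * lam) := hcX.mul_right hclam
    have := (isCoprime_mul_unit_left_right hu _ _).mpr this
    rwa [← mul_assoc] at this
end
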